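/- For every integer n ≥ 1 the Roman domination number of the path graph on n vertices is ⌈2n/3⌉, and for every integer n ≥ 3 the Roman domination number of the cycle graph on n vertices is ⌈2n/3⌉. -/

import Mathlib

/-! Every vertex labelled `0` is one of the at most `Δ` neighbours of a vertex labelled `2`, so
`|V| ≤ |V₁| + (Δ + 1)|V₂|` while the weight is `w = |V₁| + 2|V₂|`; for `Δ ≥ 1` this gives
`2|V| ≤ (Δ + 1) w`, i.e. `γ_R ≥ ⌈2n/3⌉` on paths and cycles. Conversely, labelling the middle
vertex of each consecutive triple of the path by `2` (and a leftover single vertex by `1`) has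
weight `⌈2n/3⌉`, and it is also Roman dominating on the cycle, which contains the path. -/

/-- The set of nonzero zero-divisors of a commutative ring `R`. -/
def zdvSet (R : Type*) [CommRing R] : Set R :=
  {x | x ≠ 0 ∧ ∃ y, y ≠ 0 ∧ x * y = 0}

/-- The zero-divisor graph `Γ(R)`: vertices are the nonzero zero-divisors of `R`,
with distinct `x`, `y` adjacent iff `x * y = 0`. -/
def zeroDivisorGraph (R : Type*) [CommRing R] : SimpleGraph (zdvSet R) where
  Adj a b := a ≠ b ∧ (a : R) * (b : R) = 0
  symm := by
    constructor
    rintro a b ⟨hne, hmul⟩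
    exact ⟨hne.symm, by rwa [mul_comm]⟩
  loopless := by constructor; rintro a ⟨hne, _⟩; exact hne rfl

/-- A Roman dominating function: every vertex with value `0` has a neighbour
with value `2`. -/
def IsRomanDominating {V : Type*} (G : SimpleGraph V) (f : V → Fin 3) : Prop :=
  ∀ u, f u = 0 → ∃ v, G.Adj u v ∧ f v = 2

/-- The Roman domination number: the minimum weight of a (finitely supported)
Roman dominating function. -/
noncomputable def romanDominationNumber {V : Type*} (G : SimpleGraph V) : ℕ :=
  sInf {w | ∃ f : V → Fin 3, IsRomanDominating G f ∧
    {v | f v ≠ 0}.Finite ∧ w = ∑ᶠ v, (f v : ℕ)}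

open Finset SimpleGraph

section RomanDomination

variable {V : Type*} {G : SimpleGraph V}

lemma romanDominationNumber_le [Fintype V] {f : V → Fin 3} (hf : IsRomanDominating G f) :
    romanDominationNumber G ≤ ∑ v, (f v : ℕ) :=
  Nat.sInf_le ⟨f, hf, Set.toFinite _, (finsum_eq_sum_of_fintype _).symm⟩

lemma le_romanDominationNumber [Fintype V] {w : ℕ}
    (h : ∀ f, IsRomanDominating G f → w ≤ ∑ v, (f v : ℕ)) :
    w ≤ romanDominationNumber G := by
  refine le_csInf ⟨_, fun _ => 2, fun _ h => by simp at h, Set.toFinite _, rfl⟩ ?_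
  rintro _ ⟨f, hf, -, rfl⟩
  rw [finsum_eq_sum_of_fintype]
  exact h f hf

lemma card_filter_eq_zero_le_mul_card_filter_eq_two [Fintype V] [DecidableRel G.Adj] {Δ : ℕ}
    (hdeg : ∀ v, G.degree v ≤ Δ) {f : V → Fin 3} (hf : IsRomanDominating G f) :
    #{v | f v = 0} ≤ Δ * #{v | f v = 2} := by
  classical
  have hcover : ({v | f v = 0} : Finset V) ⊆
      ({v | f v = 2} : Finset V).biUnion fun v => G.neighborFinset v := by
    intro u hu
    obtain ⟨v, huv, hv⟩ := hf u (mem_filter.1 hu).2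
    exact mem_biUnion.2 ⟨v, mem_filter.2 ⟨mem_univ v, hv⟩, (mem_neighborFinset _ _ _).2 huv.symm⟩
  calc #{v | f v = 0} ≤ ∑ v ∈ ({v | f v = 2} : Finset V), G.degree v :=
        (card_le_card hcover).trans card_biUnion_le
    _ ≤ Δ * #{v | f v = 2} := by
        rw [mul_comm, ← smul_eq_mul, ← sum_const]
        exact sum_le_sum fun v _ => hdeg v

lemma two_mul_card_le_mul_sum [Fintype V] [DecidableRel G.Adj] {Δ : ℕ} (hΔ : 1 ≤ Δ)
    (hdeg : ∀ v, G.degree v ≤ Δ) {f : V → Fin 3} (hf : IsRomanDominating G f) :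
    2 * Fintype.card V ≤ (Δ + 1) * ∑ v, (f v : ℕ) := by
  have hpoint : ∀ v, 2 + 2 * Δ * (if f v = 2 then 1 else 0)
      ≤ (Δ + 1) * (f v : ℕ) + 2 * (if f v = 0 then 1 else 0) := by
    intro v
    generalize f v = x
    fin_cases x <;> simp <;> omega
  have hsum := sum_le_sum fun v (_ : v ∈ univ) => hpoint v
  simp only [sum_add_distrib, ← mul_sum, sum_boole, sum_const, card_univ, smul_eq_mul,
    Nat.cast_id] at hsum
  have := card_filter_eq_zero_le_mul_card_filter_eq_two hdeg hf
  linarith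

end RomanDomination

/-- Label `2` on the vertices `k ≡ 1 (mod 3)`, each guarding its two neighbours; when
`n ≡ 1 (mod 3)` the last vertex is left unguarded and is labelled `1`. -/
def pathRomanFunction (n k : ℕ) : Fin 3 :=
  if k % 3 = 1 then 2 else if n % 3 = 1 ∧ k = n - 1 then 1 else 0

lemma sum_range_pathRomanFunction {n m : ℕ} (hm : m ≤ n) :
    ∑ k ∈ range m, (pathRomanFunction n k : ℕ) =
      2 * ((m + 1) / 3) + if n % 3 = 1 ∧ m = n then 1 else 0 := by
  induction m with
  | zero => simp; omega
  | succ m ih =>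
    rw [sum_range_succ, ih (by omega), pathRomanFunction]
    split_ifs <;> simp <;> omega

lemma sum_pathRomanFunction (n : ℕ) :
    ∑ v : Fin n, (pathRomanFunction n v : ℕ) = (2 * n + 2) / 3 := by
  rw [Fin.sum_univ_eq_sum_range (fun k => (pathRomanFunction n k : ℕ)),
    sum_range_pathRomanFunction le_rfl]
  split_ifs <;> omega

lemma isRomanDominating_pathRomanFunction {n : ℕ} {G : SimpleGraph (Fin n)}
    (hG : pathGraph n ≤ G) : IsRomanDominating G fun v => pathRomanFunction n v := by
  intro u hu
  simp only [pathRomanFunction, Fin.isValue] at hu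
  split_ifs at hu with h₁ h₂
  · cases hu
  · cases hu
  have hu_lt := u.isLt
  by_cases h₀ : (u : ℕ) % 3 = 0
  · refine ⟨⟨u + 1, by omega⟩, hG (pathGraph_adj.2 (Or.inl rfl)), ?_⟩
    simp only [pathRomanFunction]
    rw [if_pos (by omega)]
  · refine ⟨⟨u - 1, by omega⟩, hG (pathGraph_adj.2 (Or.inr (Nat.sub_add_cancel (by omega)))), ?_⟩
    simp only [pathRomanFunction]
    rw [if_pos (by omega)]

lemma cycleGraph_degree_le_two {n : ℕ} (v : Fin n) : (cycleGraph n).degree v ≤ 2 := by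
  match n with
  | 0 => exact v.elim0
  | 1 => simp [cycleGraph_one_eq_bot]
  | _ + 2 => exact cycleGraph_degree_two_le.trans_le card_le_two

lemma pathGraph_degree_le_two {n : ℕ} [DecidableRel (pathGraph n).Adj] (v : Fin n) :
    (pathGraph n).degree v ≤ 2 :=
  (degree_le_of_le pathGraph_le_cycleGraph).trans (cycleGraph_degree_le_two v)

lemma romanDominationNumber_eq_of_pathGraph_le {n : ℕ} {G : SimpleGraph (Fin n)}
    [DecidableRel G.Adj] (hG : pathGraph n ≤ G) (hdeg : ∀ v, G.degree v ≤ 2) :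
    romanDominationNumber G = (2 * n + 2) / 3 := by
  refine le_antisymm ?_ (le_romanDominationNumber fun f hf => ?_)
  · rw [← sum_pathRomanFunction n]
    exact romanDominationNumber_le (isRomanDominating_pathRomanFunction hG)
  · have := two_mul_card_le_mul_sum one_le_two hdeg hf
    rw [Fintype.card_fin] at this
    omega

lemma natCeil_two_mul_div_three (n : ℕ) : ⌈(2 * n : ℚ) / 3⌉₊ = (2 * n + 2) / 3 := by
  have hle : ⌈(2 * n : ℚ) / 3⌉₊ ≤ (2 * n + 2) / 3 := by
    rw [Nat.ceil_le, div_le_iff₀ three_pos]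
    exact_mod_cast (by omega : 2 * n ≤ (2 * n + 2) / 3 * 3)
  have hge : (2 * n : ℚ) ≤ ⌈(2 * n : ℚ) / 3⌉₊ * 3 := (div_le_iff₀ three_pos).1 (Nat.le_ceil _)
  have : 2 * n ≤ ⌈(2 * n : ℚ) / 3⌉₊ * 3 := by exact_mod_cast hge
  omega

theorem stmt_19 :
    (∀ n : ℕ, 1 ≤ n →
      romanDominationNumber (SimpleGraph.pathGraph n) = ⌈(2 * n : ℚ) / 3⌉₊) ∧
    (∀ n : ℕ, 3 ≤ n →
      romanDominationNumber (SimpleGraph.cycleGraph n) = ⌈(2 * n : ℚ) / 3⌉₊) := by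
  classical
  refine ⟨fun n _ => ?_, fun n _ => ?_⟩
  · rw [natCeil_two_mul_div_three,
      romanDominationNumber_eq_of_pathGraph_le le_rfl pathGraph_degree_le_two]
  · rw [natCeil_two_mul_div_three,
      romanDominationNumber_eq_of_pathGraph_le pathGraph_le_cycleGraph cycleGraph_degree_le_two]
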